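/- Let p and q be odd primes with q = p + 2, ε = ±1, and D squarefree with gcd(D, 2pq) = 1. If 7 ∤ pqD and p ≡ 2, 3, or 6 (mod 7), then the curve y² = x(x + εpD)(x + εqD) reduced modulo 7 has exactly 8 points over F₇, so a₇ = 7 + 1 − 8 = 0. -/

import Mathlib

/-! The affine points of `y² = g(x)` over `𝔽_ℓ`, ℓ odd, number `ℓ + ∑ₓ χ(g x)` with `χ` the
quadratic character. Substituting `x = εD·t` turns `x(x + εpD)(x + εqD)` into
`(εD)³ t(t + p)(t + p + 2)`, so the character sum is `χ(εD)` times the one of the curve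
`y² = t(t + p)(t + p + 2)`, which depends only on `p mod 7`. For `p ≡ 2, 3, 6 (mod 7)` that sum
vanishes (a direct count), whatever the twist `εD`. -/

open Finset

section

variable {F : Type*} [Field F] [Fintype F] [DecidableEq F]

theorem card_filter_sq_eq (hF : ringChar F ≠ 2) (g : F → F) :
    ((univ.filter fun P : F × F => P.2 ^ 2 = g P.1).card : ℤ) =
      Fintype.card F + ∑ x, quadraticChar F (g x) :=
  calc ((univ.filter fun P : F × F => P.2 ^ 2 = g P.1).card : ℤ)
      = ∑ x, ((univ.filter fun y : F => y ^ 2 = g x).card : ℤ) := by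
        simp only [card_filter, Fintype.sum_prod_type]; push_cast; rfl
    _ = ∑ x, (quadraticChar F (g x) + 1) := sum_congr rfl fun x _ => by
        rw [← quadraticChar_card_sqrts hF]; congr 2; ext; simp
    _ = Fintype.card F + ∑ x, quadraticChar F (g x) := by
        rw [sum_add_distrib, sum_const, card_univ, nsmul_one, add_comm]

theorem sum_quadraticChar_cubic_smul (k a b : F) (hk : k ≠ 0) :
    ∑ x, quadraticChar F (x * (x + k * a) * (x + k * b)) =
      quadraticChar F k * ∑ t, quadraticChar F (t * (t + a) * (t + b)) := by
  rw [mul_sum, ← _root_.Equiv.sum_comp (Equiv.mulLeft₀ k hk)]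
  refine sum_congr rfl fun t _ => ?_
  have hcube : k * t * (k * t + k * a) * (k * t + k * b) =
      k ^ 2 * (k * (t * (t + a) * (t + b))) := by ring
  rw [Equiv.mulLeft₀_apply, hcube, map_mul, quadraticChar_sq_one' hk, one_mul, map_mul]

end

section

theorem fact_prime_seven : Fact (Nat.Prime 7) := ⟨by norm_num⟩

-- Local: as a global instance it would change the `DecidableEq (ZMod 7)` found in `stmt_1`.
attribute [local instance] fact_prime_seven

theorem ringChar_zmod_seven_ne_two : ringChar (ZMod 7) ≠ 2 := by
  rw [ZMod.ringChar_zmod_n]; norm_num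

theorem sum_quadraticChar_zmod_seven (a : ZMod 7) (ha : a = 2 ∨ a = 3 ∨ a = 6) :
    ∑ t, quadraticChar (ZMod 7) (t * (t + a) * (t + (a + 2))) = 0 := by
  have h := card_filter_sq_eq ringChar_zmod_seven_ne_two fun t => t * (t + a) * (t + (a + 2))
  have hcount : (univ.filter fun P : ZMod 7 × ZMod 7 =>
      P.2 ^ 2 = P.1 * (P.1 + a) * (P.1 + (a + 2))).card = 7 := by
    rcases ha with rfl | rfl | rfl <;> decide
  rw [hcount, ZMod.card] at h
  omega

end

theorem stmt_1_general (p q : ℕ)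
    (hq2 : q = p + 2) (ε : ℤ) (hε : ε = 1 ∨ ε = -1)
    (D : ℤ)
    (h7 : ¬ ((7 : ℤ) ∣ (p * q * D : ℤ)))
    (hpmod : p % 7 = 2 ∨ p % 7 = 3 ∨ p % 7 = 6)
    (N : ℕ)
    (hN : N = (Finset.univ.filter (fun P : ZMod 7 × ZMod 7 =>
      P.2 ^ 2 = P.1 * (P.1 + (ε : ZMod 7) * (p : ZMod 7) * (D : ZMod 7))
        * (P.1 + (ε : ZMod 7) * (q : ZMod 7) * (D : ZMod 7)))).card + 1) :
    N = 8 ∧ (7 + 1 - (N : ℤ) = 0) := by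
  have := fact_prime_seven
  have hD : (D : ZMod 7) ≠ 0 := by
    rw [Ne, ZMod.intCast_zmod_eq_zero_iff_dvd]
    exact fun h => h7 (h.mul_left _)
  have hεD : (ε : ZMod 7) * D ≠ 0 := by
    refine mul_ne_zero ?_ hD
    rcases hε with rfl | rfl <;> simp
  have hp : (p : ZMod 7) = 2 ∨ (p : ZMod 7) = 3 ∨ (p : ZMod 7) = 6 := by
    rw [← ZMod.natCast_mod p 7]
    rcases hpmod with h | h | h <;> simp [h]
  have hcurve : ∀ x : ZMod 7, x * (x + ε * p * D) * (x + ε * q * D) =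
      x * (x + ε * D * p) * (x + ε * D * (p + 2)) := fun x => by
    rw [hq2]; push_cast; ring
  have hcount : ((univ.filter fun P : ZMod 7 × ZMod 7 =>
      P.2 ^ 2 = P.1 * (P.1 + ε * p * D) * (P.1 + ε * q * D)).card : ℤ) = 7 := by
    rw [card_filter_sq_eq ringChar_zmod_seven_ne_two
      fun x => x * (x + ε * p * D) * (x + ε * q * D), ZMod.card]
    simp only [hcurve, sum_quadraticChar_cubic_smul _ _ _ hεD, sum_quadraticChar_zmod_seven _ hp]
    norm_num
  omega

/-- If `7 ∤ pqD` and `p ≡ 2, 3, 6 (mod 7)`, then the reduction mod 7 of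
`y² = x(x + εpD)(x + εqD)` has exactly 8 points over `F₇` (including the point
at infinity), so `a₇ = 7 + 1 - 8 = 0`. -/
theorem stmt_1 (p q : ℕ) (hp : p.Prime) (hq : q.Prime) (hpodd : Odd p)
    (hq2 : q = p + 2) (ε : ℤ) (hε : ε = 1 ∨ ε = -1)
    (D : ℤ) (hD : Squarefree D) (hcop : IsCoprime D (2 * p * q : ℤ))
    (h7 : ¬ ((7 : ℤ) ∣ (p * q * D : ℤ)))
    (hpmod : p % 7 = 2 ∨ p % 7 = 3 ∨ p % 7 = 6)
    (N : ℕ)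
    (hN : N = (Finset.univ.filter (fun P : ZMod 7 × ZMod 7 =>
      P.2 ^ 2 = P.1 * (P.1 + (ε : ZMod 7) * (p : ZMod 7) * (D : ZMod 7))
        * (P.1 + (ε : ZMod 7) * (q : ZMod 7) * (D : ZMod 7)))).card + 1) :
    N = 8 ∧ (7 + 1 - (N : ℤ) = 0) :=
  stmt_1_general p q hq2 ε hε D h7 hpmod N hN
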